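/- Fix x̌, x̂ ∈ ℝⁿ with x̌⁽ˡ⁾ < x̂⁽ˡ⁾ for every l, and let g be the associated erf-product function. Then g(z) > 0 for all z ∈ ℝⁿ and the function z ↦ log g(z) is concave on ℝⁿ. -/

import Mathlib

/-- The Gauss error function `erf x = (2/√π) ∫₀ˣ exp (−t²) dt`. -/
noncomputable def erf (x : ℝ) : ℝ :=
  (2 / Real.sqrt Real.pi) * ∫ t in (0:ℝ)..x, Real.exp (-t ^ 2)

/-- The erf-product function
`g z = 2⁻ⁿ ∏ₗ (erf((zₗ − x̌ₗ)/√2) − erf((zₗ − x̂ₗ)/√2))`. -/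
noncomputable def gerf {n : ℕ} (xlo xhi : Fin n → ℝ) (z : Fin n → ℝ) : ℝ :=
  (1 / 2 : ℝ) ^ n *
    ∏ l, (erf ((z l - xlo l) / Real.sqrt 2) - erf ((z l - xhi l) / Real.sqrt 2))

/-!
Each factor of `g` is, after the substitution `c = (t - x̂)/√2`, a positive multiple of the
Gaussian mass `Z(c) = ∫_c^{c+d} e^{-u²} du` of a window of fixed width `d = (x̂ - x̌)/√2 > 0`, so
`log g` is a constant plus a sum of functions `log Z` of single coordinates. With `α = c`,
`β = c + d`, `(log Z)'' ≤ 0` amounts to `2 Z (α e^{-α²} - β e^{-β²}) ≤ (e^{-α²} - e^{-β²})²`, which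
follows by multiplying out `2 α Z ≤ e^{-α²} - e^{-β²} = ∫_α^β 2u e^{-u²} du ≤ 2 β Z`.
-/

open Real Set intervalIntegral

lemma ConcaveOn.sum {𝕜 E β ι : Type*} [Semiring 𝕜] [PartialOrder 𝕜] [AddCommMonoid E]
    [AddCommMonoid β] [PartialOrder β] [IsOrderedAddMonoid β] [SMul 𝕜 E] [Module 𝕜 β]
    {s : Set E} (hs : Convex 𝕜 s) {t : Finset ι} {f : ι → E → β}
    (hf : ∀ i ∈ t, ConcaveOn 𝕜 s (f i)) : ConcaveOn 𝕜 s fun x => ∑ i ∈ t, f i x := by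
  classical
  induction t using Finset.induction_on with
  | empty => simpa using concaveOn_const 0 hs
  | insert i t hi ih =>
    simp only [Finset.sum_insert hi]
    exact (hf i (Finset.mem_insert_self i t)).add
      (ih fun j hj => hf j (Finset.mem_insert_of_mem hj))

lemma concaveOn_univ_of_hasDerivAt2_nonpos {f f' f'' : ℝ → ℝ}
    (hf : ∀ x, HasDerivAt f (f' x) x) (hf' : ∀ x, HasDerivAt f' (f'' x) x)
    (hf'' : ∀ x, f'' x ≤ 0) : ConcaveOn ℝ univ f :=
  concaveOn_of_hasDerivWithinAt2_nonpos convex_univ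
    (fun x _ => (hf x).continuousAt.continuousWithinAt)
    (fun x _ => (hf x).hasDerivWithinAt) (fun x _ => (hf' x).hasDerivWithinAt) fun x _ => hf'' x

lemma hasDerivAt_exp_neg_sq (x : ℝ) :
    HasDerivAt (fun u => exp (-u ^ 2)) (-(2 * x) * exp (-x ^ 2)) x := by
  simpa [mul_comm] using ((hasDerivAt_pow 2 x).neg).exp

lemma hasDerivAt_erf (x : ℝ) : HasDerivAt erf (2 / √π * exp (-x ^ 2)) x :=
  (integral_hasDerivAt_right (Continuous.intervalIntegrable (by fun_prop) _ _)
    (Continuous.stronglyMeasurableAtFilter (by fun_prop) _ _) (by fun_prop)).const_mul _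

lemma erf_strictMono : StrictMono erf :=
  strictMono_of_hasDerivAt_pos hasDerivAt_erf fun x => by positivity

lemma erf_sub_erf (x y : ℝ) : erf x - erf y = 2 / √π * ∫ u in y..x, exp (-u ^ 2) := by
  rw [erf, erf, ← mul_sub, integral_interval_sub_left
    (Continuous.intervalIntegrable (by fun_prop) _ _)
    (Continuous.intervalIntegrable (by fun_prop) _ _)]

lemma two_mul_integral_exp_neg_sq_mul_le {α β : ℝ} (hαβ : α ≤ β) :
    2 * (∫ u in α..β, exp (-u ^ 2)) * (α * exp (-α ^ 2) - β * exp (-β ^ 2)) ≤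
      (exp (-α ^ 2) - exp (-β ^ 2)) ^ 2 := by
  have hdiff : exp (-α ^ 2) - exp (-β ^ 2) = ∫ u in α..β, 2 * u * exp (-u ^ 2) := by
    rw [integral_eq_sub_of_hasDerivAt (f := fun u => -exp (-u ^ 2))
      (fun u _ => by simpa using (hasDerivAt_exp_neg_sq u).fun_neg)
      (Continuous.intervalIntegrable (by fun_prop) _ _)]
    ring
  have hlo : 2 * α * ∫ u in α..β, exp (-u ^ 2) ≤ exp (-α ^ 2) - exp (-β ^ 2) := by
    rw [hdiff, ← integral_const_mul]
    refine integral_mono_on hαβ (Continuous.intervalIntegrable (by fun_prop) _ _)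
      (Continuous.intervalIntegrable (by fun_prop) _ _) fun u hu => ?_
    gcongr
    exact hu.1
  have hhi : exp (-α ^ 2) - exp (-β ^ 2) ≤ 2 * β * ∫ u in α..β, exp (-u ^ 2) := by
    rw [hdiff, ← integral_const_mul]
    refine integral_mono_on hαβ (Continuous.intervalIntegrable (by fun_prop) _ _)
      (Continuous.intervalIntegrable (by fun_prop) _ _) fun u hu => ?_
    gcongr
    exact hu.2
  nlinarith [mul_le_mul_of_nonneg_right hlo (exp_pos (-α ^ 2)).le,
    mul_le_mul_of_nonneg_right hhi (exp_pos (-β ^ 2)).le]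

lemma concaveOn_log_erf_add_sub_erf {d : ℝ} (hd : 0 < d) :
    ConcaveOn ℝ univ fun c => log (erf (c + d) - erf c) := by
  have hpos (c : ℝ) : 0 < erf (c + d) - erf c :=
    sub_pos.2 (erf_strictMono (lt_add_of_pos_right c hd))
  have hF (c : ℝ) : HasDerivAt (fun c => erf (c + d) - erf c)
      (2 / √π * (exp (-(c + d) ^ 2) - exp (-c ^ 2))) c := by
    rw [mul_sub]
    exact ((hasDerivAt_erf (c + d)).comp_add_const c d).fun_sub (hasDerivAt_erf c)
  have hF' (c : ℝ) : HasDerivAt (fun c => 2 / √π * (exp (-(c + d) ^ 2) - exp (-c ^ 2)))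
      (2 / √π * (-(2 * (c + d)) * exp (-(c + d) ^ 2) - -(2 * c) * exp (-c ^ 2))) c :=
    (((hasDerivAt_exp_neg_sq (c + d)).comp_add_const c d).sub (hasDerivAt_exp_neg_sq c)).const_mul _
  refine concaveOn_univ_of_hasDerivAt2_nonpos (fun c => (hF c).log (hpos c).ne')
    (fun c => (hF' c).div (hF c) (hpos c).ne') fun c => ?_
  refine div_nonpos_of_nonpos_of_nonneg ?_ (sq_nonneg _)
  have key := two_mul_integral_exp_neg_sq_mul_le (lt_add_of_pos_right c hd).le
  rw [erf_sub_erf]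
  nlinarith [mul_le_mul_of_nonneg_left key (sq_nonneg (2 / √π))]

lemma concaveOn_log_erf_sub_erf {a b : ℝ} (hab : a < b) :
    ConcaveOn ℝ univ fun t => log (erf ((t - a) / √2) - erf ((t - b) / √2)) := by
  let g : ℝ →ᵃ[ℝ] ℝ :=
    ⟨fun t => (t - b) / √2, (√2)⁻¹ • LinearMap.id, fun p v => by simp; ring⟩
  have h := (concaveOn_log_erf_add_sub_erf (d := (b - a) / √2)
    (div_pos (sub_pos.2 hab) (by positivity))).comp_affineMap g
  rw [preimage_univ] at h
  refine h.congr fun t _ => ?_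
  show log (erf ((t - b) / √2 + (b - a) / √2) - erf ((t - b) / √2)) = _
  ring_nf

/-- if `x̌ₗ < x̂ₗ` for every `l`, then the erf-product function `g` is
positive everywhere and `log ∘ g` is concave on `ℝⁿ`. -/
theorem gerf_pos_and_logConcave
    {n : ℕ} (xlo xhi : Fin n → ℝ) (hx : ∀ l, xlo l < xhi l) :
    (∀ z : Fin n → ℝ, 0 < gerf xlo xhi z) ∧
      ConcaveOn ℝ Set.univ (fun z : Fin n → ℝ => Real.log (gerf xlo xhi z)) := by
  have hfactor (z : Fin n → ℝ) (l : Fin n) :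
      0 < erf ((z l - xlo l) / √2) - erf ((z l - xhi l) / √2) := by
    refine sub_pos.2 (erf_strictMono ?_)
    gcongr
    exact hx l
  have hprod (z : Fin n → ℝ) := Finset.prod_pos (s := Finset.univ) fun l _ => hfactor z l
  refine ⟨fun z => mul_pos (by positivity) (hprod z), ?_⟩
  have hlog : (fun z => log (gerf xlo xhi z)) = fun z => log ((1 / 2) ^ n) +
      ∑ l, log (erf ((z l - xlo l) / √2) - erf ((z l - xhi l) / √2)) := by
    funext z
    rw [gerf, log_mul (by positivity) (hprod z).ne', log_prod fun l _ => (hfactor z l).ne']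
  have hcoord (l : Fin n) : ConcaveOn ℝ univ fun z : Fin n → ℝ =>
      log (erf ((z l - xlo l) / √2) - erf ((z l - xhi l) / √2)) := by
    have h := (concaveOn_log_erf_sub_erf (hx l)).comp_linearMap
      (LinearMap.proj l : (Fin n → ℝ) →ₗ[ℝ] ℝ)
    rwa [preimage_univ] at h
  rw [hlog]
  exact (concaveOn_const _ convex_univ).add <| ConcaveOn.sum convex_univ fun l _ => hcoord l
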